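/- Fix α∈(0,1), γ∈(0,α) and set θ=−α−γ. For k≥1 define h_k on {x∈(0,1)^k : x_1+⋯+x_k<1} by h_k(x) = (γ + (1−α−γ)·(1 − Σ_{i=1}^k x_i² − ((1−α)/(1+(k−1)α−γ))·(1−Σ_{i=1}^k x_i)²))·gem*_{α,θ;k}(x). Then for every k≥1 and every x∈(0,1)^k with S := x_1+⋯+x_k < 1, ∫_0^{1−S} h_{k+1}(x_1,…,x_k,y) dy = h_k(x_1,…,x_k). -/

import Mathlib

open scoped BigOperators
open MeasureTheory

/-- The Beta function `B(a,b) = Γ(a)Γ(b)/Γ(a+b)`. -/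
noncomputable def Bfun (a b : ℝ) : ℝ := Real.Gamma a * Real.Gamma b / Real.Gamma (a + b)

set_option maxHeartbeats 1000000

lemma Bfun_pos {a b : ℝ} (ha : 0 < a) (hb : 0 < b) : 0 < Bfun a b :=
  div_pos (mul_pos (Real.Gamma_pos_of_pos ha) (Real.Gamma_pos_of_pos hb))
    (Real.Gamma_pos_of_pos (by linarith))

lemma beta_interval {a b R : ℝ} (ha : 0 < a) (hb : 0 < b) (hR : 0 < R) :
    ∫ y in (0:ℝ)..R, y ^ (a-1) * (R - y) ^ (b-1) = R ^ (a+b-1) * Bfun a b := by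
  have hbeta : Complex.betaIntegral a b = ((Bfun a b : ℝ) : ℂ) := by
    have h := Complex.Gamma_mul_Gamma_eq_betaIntegral (s := (a:ℝ)) (t := (b:ℝ))
      (by simpa using ha) (by simpa using hb)
    have hΓ : Complex.Gamma ((a:ℂ) + (b:ℂ)) ≠ 0 := by
      rw [← Complex.ofReal_add, Complex.Gamma_ofReal]
      exact_mod_cast (Real.Gamma_pos_of_pos (by linarith)).ne'
    rw [← Complex.ofReal_add, Complex.Gamma_ofReal, Complex.Gamma_ofReal, Complex.Gamma_ofReal] at h
    rw [Bfun]
    push_cast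
    rw [eq_div_iff]
    · rw [h]; push_cast; ring
    · exact_mod_cast (Real.Gamma_pos_of_pos (by linarith : (0:ℝ) < a + b)).ne'
  have hscaled := Complex.betaIntegral_scaled (a:ℂ) (b:ℂ) hR
  have hcongr : ∫ x in (0:ℝ)..R, ((x:ℂ)) ^ ((a:ℂ) - 1) * ((R:ℂ) - x) ^ ((b:ℂ) - 1)
      = ∫ x in (0:ℝ)..R, ((x ^ (a-1) * (R - x) ^ (b-1) : ℝ) : ℂ) := by
    rw [intervalIntegral.integral_of_le hR.le, intervalIntegral.integral_of_le hR.le]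
    refine setIntegral_congr_fun measurableSet_Ioc fun x hx => ?_
    rw [Complex.ofReal_mul, Complex.ofReal_cpow hx.1.le, Complex.ofReal_cpow (by linarith [hx.2])]
    push_cast; ring_nf
  rw [hbeta, hcongr, intervalIntegral.integral_ofReal] at hscaled
  have : ((R:ℂ)) ^ ((a:ℂ) + (b:ℂ) - 1) = ((R ^ (a+b-1) : ℝ) : ℂ) := by
    rw [Complex.ofReal_cpow hR.le]; push_cast; ring_nf
  rw [this, ← Complex.ofReal_mul] at hscaled
  exact_mod_cast hscaled

lemma beta_integrable {a b R : ℝ} (ha : 0 < a) (hb : 0 < b) (hR : 0 < R) :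
    IntegrableOn (fun y => y ^ (a-1) * (R - y) ^ (b-1)) (Set.Ioo 0 R) := by
  have h : IntervalIntegrable (fun y => y ^ (a-1) * (R - y) ^ (b-1)) volume 0 R := by
    by_contra hcon
    have h0 := intervalIntegral.integral_undef hcon
    rw [beta_interval ha hb hR] at h0
    exact absurd h0 (mul_pos (Real.rpow_pos_of_pos hR _) (Bfun_pos ha hb)).ne'
  exact ((intervalIntegrable_iff_integrableOn_Ioc_of_le hR.le).mp h).mono_set Set.Ioo_subset_Ioc_self

lemma beta_Ioo {a b R : ℝ} (ha : 0 < a) (hb : 0 < b) (hR : 0 < R) :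
    ∫ y in Set.Ioo (0:ℝ) R, y ^ (a-1) * (R - y) ^ (b-1) = R ^ (a+b-1) * Bfun a b := by
  rw [← MeasureTheory.integral_Ioc_eq_integral_Ioo, ← intervalIntegral.integral_of_le hR.le]
  exact beta_interval ha hb hR

lemma Gamma_add_two {s : ℝ} (hs : 0 < s) : Real.Gamma (s + 2) = (s+1) * s * Real.Gamma s := by
  have h1 : s + 2 = (s + 1) + 1 := by ring
  rw [h1, Real.Gamma_add_one (by linarith), Real.Gamma_add_one hs.ne']
  ring

lemma beta_rec {a b : ℝ} (ha : 0 < a) (hb : 0 < b) :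
    Bfun (a+2) b + (a/(b+1)) * Bfun a (b+2) = (a/(a+b)) * Bfun a b := by
  have hab : 0 < a + b := by linarith
  have hΓa := Real.Gamma_pos_of_pos ha
  have hΓb := Real.Gamma_pos_of_pos hb
  have hΓab := Real.Gamma_pos_of_pos hab
  rw [Bfun, Bfun, Bfun, Gamma_add_two ha, Gamma_add_two hb,
    show a + 2 + b = (a+b) + 2 by ring, show a + (b+2) = (a+b) + 2 by ring,
    Gamma_add_two hab]
  field_simp
  ring

lemma integral_core {a b R : ℝ} (ha : 0 < a) (hb : 0 < b) (hR : 0 < R) (p q r : ℝ) :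
    ∫ y in Set.Ioo (0:ℝ) R, (p + q*y^2 + r*(R-y)^2) * (y^(a-1)*(R-y)^(b-1))
      = p * (R^(a+b-1) * Bfun a b) + q * (R^(a+b+1) * Bfun (a+2) b)
        + r * (R^(a+b+1) * Bfun a (b+2)) := by
  have hcongr : ∀ y ∈ Set.Ioo (0:ℝ) R,
      (p + q*y^2 + r*(R-y)^2) * (y^(a-1)*(R-y)^(b-1))
        = p * (y^(a-1)*(R-y)^(b-1)) + q * (y^((a+2)-1)*(R-y)^(b-1))
          + r * (y^(a-1)*(R-y)^((b+2)-1)) := by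
    intro y hy
    have hy2 : y^((a+2)-1) = y^2 * y^(a-1) := by
      rw [show (a+2)-1 = 2+(a-1) by ring, Real.rpow_add hy.1, Real.rpow_two]
    have hRy2 : (R-y)^((b+2)-1) = (R-y)^2 * (R-y)^(b-1) := by
      rw [show (b+2)-1 = 2+(b-1) by ring, Real.rpow_add (by linarith [hy.2]), Real.rpow_two]
    rw [hy2, hRy2]; ring
  rw [setIntegral_congr_fun measurableSet_Ioo hcongr]
  have i0 := beta_integrable ha hb hR
  have i2 := beta_integrable (by linarith : (0:ℝ) < a + 2) hb hR
  have i3 := beta_integrable ha (by linarith : (0:ℝ) < b + 2) hR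
  have i01 : IntegrableOn (fun y:ℝ => p * (y^(a-1)*(R-y)^(b-1)) + q * (y^((a+2)-1)*(R-y)^(b-1)))
      (Set.Ioo 0 R) := (i0.const_mul p).add (i2.const_mul q)
  rw [integral_add i01 (i3.const_mul r),
    integral_add (i0.const_mul p) (i2.const_mul q),
    MeasureTheory.integral_const_mul, MeasureTheory.integral_const_mul, MeasureTheory.integral_const_mul,
    beta_Ioo ha hb hR, beta_Ioo (by linarith) hb hR, beta_Ioo ha (by linarith) hR]
  ring_nf

lemma Iic_castSucc_eq {k : ℕ} (j : Fin k) :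
    Finset.Iic (Fin.castSucc j) = (Finset.Iic j).map Fin.castSuccEmb := by
  ext i
  simp only [Finset.mem_Iic, Finset.mem_map]
  constructor
  · intro hi
    have hik : i.val < k := lt_of_le_of_lt (by exact_mod_cast hi) j.isLt
    refine ⟨⟨i.val, hik⟩, ?_, ?_⟩
    · simpa [Fin.le_def] using hi
    · exact Fin.ext rfl
  · rintro ⟨a, ha, rfl⟩
    exact Fin.castSucc_le_castSucc_iff.mpr ha

lemma Iic_last_eq (k : ℕ) : Finset.Iic (Fin.last k) = Finset.univ := by
  ext i; simp [Fin.le_last]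

/-- The GEM*-density: density of the `k`-th size-biased marginal of `PD*_{α,θ}` on
`{x∈(0,1)^k : x_1+⋯+x_k<1}`. -/
noncomputable def gemStar (α θ : ℝ) {k : ℕ} (x : Fin k → ℝ) : ℝ :=
  (α * Real.Gamma (2 + θ / α) /
      (Real.Gamma (1 - α) * Real.Gamma (θ + α + 1) *
        ∏ j ∈ Finset.Icc 2 k, Bfun (1 - α) (θ + (j : ℝ) * α))) *
    (1 - ∑ i, x i) ^ (θ + (k : ℝ) * α) * (∏ j, x j ^ (-α)) /
    ∏ j : Fin k, (1 - ∑ i ∈ Finset.Iic j, x i)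

/-- Density of the `k`-th size-biased marginal `ν_k^{sb}` of the alpha-gamma dislocation
measure (Proposition 4 of the paper):
`h_k(x) = (γ + (1−α−γ)·(1 − Σ x_i² − ((1−α)/(1+(k−1)α−γ))·(1−Σ x_i)²))·gem*_{α,−α−γ;k}(x)`. -/
noncomputable def hden (α γ : ℝ) {k : ℕ} (x : Fin k → ℝ) : ℝ :=
  (γ + (1 - α - γ) *
      (1 - ∑ i, (x i) ^ 2 -
        ((1 - α) / (1 + ((k : ℝ) - 1) * α - γ)) * (1 - ∑ i, x i) ^ 2)) *
    gemStar α (-α - γ) x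

/-- Consistency of the size-biased marginals of the alpha-gamma dislocation measure:
for `x∈(0,1)^k` with `S = x_1+⋯+x_k < 1`, `∫_0^{1−S} h_{k+1}(x,y) dy = h_k(x)`. -/
theorem stmt15 (α γ : ℝ) (hα : α ∈ Set.Ioo (0 : ℝ) 1) (hγ : γ ∈ Set.Ioo (0 : ℝ) α)
    (k : ℕ) (hk : 1 ≤ k) (x : Fin k → ℝ) (hx : ∀ i, x i ∈ Set.Ioo (0 : ℝ) 1)
    (hS : ∑ i, x i < 1) :
    ∫ y in Set.Ioo (0 : ℝ) (1 - ∑ i, x i), hden α γ (Fin.snoc x y) =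
      hden α γ x := by
  obtain ⟨hα0, hα1⟩ := hα
  obtain ⟨hγ0, hγα⟩ := hγ
  have hk1 : (1:ℝ) ≤ (k:ℝ) := by exact_mod_cast hk
  set S := ∑ i, x i with hSdef
  set T := ∑ i, (x i)^2 with hTdef
  set R := 1 - S with hRdef
  have hR : 0 < R := by rw [hRdef]; linarith
  set a := 1 - α with hadef
  set b := (k:ℝ)*α - γ with hbdef
  have ha : 0 < a := by rw [hadef]; linarith
  have hb : 0 < b := by rw [hbdef]; nlinarith
  have hab : 0 < a + b := by linarith
  have hb1 : 0 < b + 1 := by linarith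
  have hpos : ∀ j : Fin k, 0 < 1 - ∑ i ∈ Finset.Iic j, x i := by
    intro j
    have h1 : ∑ i ∈ Finset.Iic j, x i ≤ S := by
      rw [hSdef]
      exact Finset.sum_le_sum_of_subset_of_nonneg (Finset.subset_univ _)
        (fun i _ _ => (hx i).1.le)
    linarith
  set D := ∏ j : Fin k, (1 - ∑ i ∈ Finset.Iic j, x i) with hDdef
  have hD : 0 < D := Finset.prod_pos fun j _ => hpos j
  set X := ∏ j, x j ^ (-α) with hXdef
  set N := α * Real.Gamma (2 + (-α - γ) / α) with hNdef
  set M := Real.Gamma (1 - α) * Real.Gamma (-α - γ + α + 1) with hMdef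
  have hM : 0 < M := by
    rw [hMdef]
    exact mul_pos (Real.Gamma_pos_of_pos (by linarith))
      (Real.Gamma_pos_of_pos (by linarith))
  set Pk := ∏ j ∈ Finset.Icc 2 k, Bfun (1 - α) (-α - γ + (j : ℝ) * α) with hPkdef
  have hPk : 0 < Pk := by
    rw [hPkdef]
    refine Finset.prod_pos fun j hj => ?_
    have h2 : (2:ℝ) ≤ (j:ℝ) := by exact_mod_cast (Finset.mem_Icc.mp hj).1
    exact Bfun_pos (by linarith) (by nlinarith)
  have hB := Bfun_pos ha hb
  -- gemStar at x
  have hgemx : gemStar α (-α - γ) x = N / (M * Pk) * R ^ (a + b - 1) * X / D := by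
    simp only [gemStar]
    rw [← hSdef, ← hXdef, ← hDdef, ← hNdef, ← hMdef, ← hPkdef, ← hRdef,
      show -α - γ + (k:ℝ)*α = a + b - 1 by rw [hadef, hbdef]; ring]
  -- snoc sums and products
  have hsum : ∀ y : ℝ, ∑ i, Fin.snoc x y i = S + y := by
    intro y; rw [Fin.sum_univ_castSucc]; simp [hSdef]
  have hsumsq : ∀ y : ℝ, ∑ i, (Fin.snoc x y i)^2 = T + y^2 := by
    intro y; rw [Fin.sum_univ_castSucc]; simp [hTdef]
  have hprodX : ∀ y : ℝ, ∏ j, Fin.snoc x y j ^ (-α) = X * y^(-α) := by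
    intro y; rw [Fin.prod_univ_castSucc]; simp [hXdef]
  have hIic : ∀ (y:ℝ) (j : Fin k),
      ∑ i ∈ Finset.Iic (Fin.castSucc j), Fin.snoc x y i = ∑ i ∈ Finset.Iic j, x i := by
    intro y j; rw [Iic_castSucc_eq, Finset.sum_map]
    refine Finset.sum_congr rfl fun i _ => ?_
    rw [show (Fin.castSuccEmb i : Fin (k+1)) = Fin.castSucc i from rfl]
    exact Fin.snoc_castSucc ..
  have hprodD : ∀ y : ℝ,
      ∏ j : Fin (k+1), (1 - ∑ i ∈ Finset.Iic j, Fin.snoc x y i) = D * (1 - (S + y)) := by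
    intro y
    rw [Fin.prod_univ_castSucc]
    congr 1
    · rw [hDdef]; exact Finset.prod_congr rfl fun j _ => by rw [hIic y j]
    · rw [Iic_last_eq, hsum y]
  have hCprod : ∏ j ∈ Finset.Icc 2 (k+1), Bfun (1 - α) (-α - γ + (j : ℝ) * α)
      = Pk * Bfun a b := by
    rw [Finset.prod_Icc_succ_top (by omega : 2 ≤ k+1), ← hPkdef]
    congr 1
    rw [show (-α - γ + ((k+1:ℕ):ℝ) * α) = b by rw [hbdef]; push_cast; ring, ← hadef]
  set KK := N / (M * (Pk * Bfun a b)) * X / D with hKKdef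
  have hgems : ∀ y ∈ Set.Ioo (0:ℝ) R, gemStar α (-α - γ) (Fin.snoc x y)
      = KK * (y^(a-1)*(R-y)^(b-1)) := by
    intro y hy
    have hy0 : 0 < y := hy.1
    have hyR : 0 < R - y := by linarith [hy.2]
    simp only [gemStar]
    rw [hsum y, hprodX y, hprodD y, hCprod, ← hNdef, ← hMdef,
      show (1:ℝ) - (S + y) = R - y by rw [hRdef]; ring,
      show -α - γ + ((k+1:ℕ):ℝ) * α = b by rw [hbdef]; push_cast; ring,
      show (R - y)^b = (R-y)^(b-1) * (R-y) by
        rw [← Real.rpow_add_one hyR.ne' (b-1)]; norm_num,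
      show y ^ (-α) = y ^ (a-1) by rw [show a - 1 = -α by rw [hadef]; ring],
      hKKdef]
    field_simp
  set E := 1 - α - γ with hEdef
  set p := (γ + E*(1 - T)) * KK with hpdef
  set q := -(E * KK) with hqdef
  set r := -(E * (a/(b+1)) * KK) with hrdef
  have key : ∀ y ∈ Set.Ioo (0:ℝ) R,
      hden α γ (Fin.snoc x y)
        = (p + q*y^2 + r*(R-y)^2) * (y^(a-1)*(R-y)^(b-1)) := by
    intro y hy
    simp only [hden]
    rw [hsumsq y, hsum y, hgems y hy,
      show (1:ℝ) - (S + y) = R - y by rw [hRdef]; ring,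
      show ((1:ℝ) - α) / (1 + (((k+1:ℕ):ℝ) - 1) * α - γ) = a/(b+1) by
        rw [hadef, hbdef]; push_cast; ring_nf,
      hpdef, hqdef, hrdef, hEdef]
    ring
  rw [setIntegral_congr_fun measurableSet_Ioo key, integral_core ha hb hR p q r]
  -- final algebra
  have hrec := beta_rec ha hb
  have hRpow : R^(a+b+1) = R^(a+b-1) * R^2 := by
    rw [show a+b+1 = (a+b-1)+2 by ring, Real.rpow_add hR, Real.rpow_two]
  simp only [hden]
  rw [← hTdef, ← hSdef, ← hRdef, hgemx,
    show (1:ℝ) + ((k:ℝ) - 1) * α - γ = a + b by rw [hadef, hbdef]; ring,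
    ← hadef, ← hEdef]
  rw [hpdef, hqdef, hrdef, hKKdef, hRpow,
    show Bfun (a+2) b = (a/(a+b)) * Bfun a b - (a/(b+1)) * Bfun a (b+2) by linarith]
  field_simp
  ring
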